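/- For all 0 ≤ k, ℓ ≤ r and every F ∈ C([a,b]×[c,d]), the Boolean sum 𝐏_{m_k} ⊕ 𝐐_{n_ℓ} := 𝐏_{m_k} + 𝐐_{n_ℓ} − 𝐏_{m_k}𝐐_{n_ℓ} satisfies ‖(𝐏_{m_k} ⊕ 𝐐_{n_ℓ})F‖_{∞,[a,b]×[c,d]} ≤ (C_{m_r,m_k} + C_{n_r,n_ℓ} + C_{m_r,m_k}·C_{n_r,n_ℓ})·‖F‖_{∞,[a,b]×[c,d]}, where C_{m_r,m_k} := C_{m_r}·(m_k+1)·‖E_{m_k}^{m_r}(α^k,:)^{−1}‖_∞ and C_{n_r,n_ℓ} := C_{n_r}·(n_ℓ+1)·‖E_{n_ℓ}^{n_r}(β^ℓ,:)^{−1}‖_∞, with C_{m_r} := max_{0≤i≤m_r} sup{|λ_i^{m_r}f| : ‖f‖_{∞,[a,b]} ≤ 1}, C_{n_r} analogous on [c,d], E_{m_k}^{m_r} the degree elevation matrix (λ_i^{m_r}(B_j^{m_k}))_{ij} with invertible row-submatrix indexed by α^k, and ‖·‖_∞ the maximum absolute row sum matrix norm. -/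

import Mathlib

open scoped BigOperators

noncomputable section

/-- Sup norm `‖f‖_{∞,S}` of a function over a set `S`. -/
def supN {α : Type*} (S : Set α) (f : α → ℝ) : ℝ := ⨆ z : S, |f z.1|

/-- Operator norm of `L` over continuous functions on `R` with sup norm `≤ 1`. -/
def opN {α : Type*} [TopologicalSpace α] (R : Set α) (L : (α → ℝ) → α → ℝ) : ℝ :=
  ⨆ G : {G : α → ℝ // ContinuousOn G R ∧ supN R G ≤ 1}, supN R (L G.1)

/-- Bernstein basis function `B_i^m` scaled to `[a,b]`. -/
def bern (m : ℕ) (a b : ℝ) (i : ℕ) : ℝ → ℝ := fun x =>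
  (m.choose i : ℝ) * ((b - x) / (b - a)) ^ (m - i) * ((x - a) / (b - a)) ^ i

/-- Uniform node `x_i^m = a + (i/m)(b-a)`. -/
def node (m : ℕ) (a b : ℝ) (i : ℕ) : ℝ := a + (i : ℝ) / (m : ℝ) * (b - a)

/-- Bernstein collocation matrix `T_m = (B_j^m(x_i^m))_{ij}`. -/
def Tmat (m : ℕ) (a b : ℝ) : Matrix (Fin (m + 1)) (Fin (m + 1)) ℝ := fun i j =>
  bern m a b j (node m a b i)

/-- Dual functionals `λ_j^m f = (T_m⁻¹ · (f(x_i^m))_i)_j`. -/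
def lam (m : ℕ) (a b : ℝ) (j : Fin (m + 1)) (f : ℝ → ℝ) : ℝ :=
  (Tmat m a b)⁻¹.mulVec (fun i => f (node m a b i)) j

/-- `λ_j^m` with a natural-number index (zero out of range). -/
def lamN (m : ℕ) (a b : ℝ) (j : ℕ) (f : ℝ → ℝ) : ℝ :=
  if h : j < m + 1 then lam m a b ⟨j, h⟩ f else 0

/-- The index map `α^k : i ↦ i·(m_r/m_k)` (when `m_k ∣ m_r` and `i ≤ m_k` the `min` is inert). -/
def alphaF (mk mr : ℕ) (i : Fin (mk + 1)) : Fin (mr + 1) :=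
  ⟨min (i.1 * (mr / mk)) mr, Nat.lt_succ_of_le (min_le_right _ _)⟩

/-- Degree elevation matrix `E_{m_k}^{m_r} = (λ_i^{m_r}(B_j^{m_k}))_{ij}`. -/
def Emat (mk mr : ℕ) (a b : ℝ) : Matrix (Fin (mr + 1)) (Fin (mk + 1)) ℝ := fun i j =>
  lam mr a b i (bern mk a b j)

/-- Row submatrix `E_{m_k}^{m_r}(α^k,:)`. -/
def Esub (mk mr : ℕ) (a b : ℝ) : Matrix (Fin (mk + 1)) (Fin (mk + 1)) ℝ := fun i j =>
  Emat mk mr a b (alphaF mk mr i) j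

/-- Dual basis polynomials `D_j^{m_k} = Σ_ℓ (E(α^k,:)⁻¹)_{ℓ j} B_ℓ^{m_k}`. -/
def Dq (mk mr : ℕ) (a b : ℝ) (j : Fin (mk + 1)) : ℝ → ℝ := fun x =>
  ∑ l : Fin (mk + 1), (Esub mk mr a b)⁻¹ l j * bern mk a b l x

/-- `D_j^{m_k}` with a natural-number index (zero out of range). -/
def DqN (mk mr : ℕ) (a b : ℝ) (j : ℕ) : ℝ → ℝ :=
  if h : j < mk + 1 then Dq mk mr a b ⟨j, h⟩ else 0

/-- Functionals `μ_i^{m_k} = λ_{α^k_i}^{m_r}`. -/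
def mu (mk mr : ℕ) (a b : ℝ) (i : Fin (mk + 1)) (f : ℝ → ℝ) : ℝ :=
  lam mr a b (alphaF mk mr i) f

/-- Univariate quasi-interpolant `P_{m_k} f = Σ_i (μ_i^{m_k} f)·D_i^{m_k}`. -/
def Pop (mk mr : ℕ) (a b : ℝ) (f : ℝ → ℝ) : ℝ → ℝ := fun x =>
  ∑ i : Fin (mk + 1), mu mk mr a b i f * Dq mk mr a b i x

/-- Bivariate extension `𝐏_{m_k} = P_{m_k} × I` (acting in the first variable). -/
def PP (mk mr : ℕ) (a b : ℝ) (F : ℝ × ℝ → ℝ) : ℝ × ℝ → ℝ := fun z =>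
  Pop mk mr a b (fun x => F (x, z.2)) z.1

/-- Bivariate extension `𝐐_{n_ℓ} = I × Q_{n_ℓ}` (acting in the second variable). -/
def QQ (nl nr : ℕ) (c d : ℝ) (F : ℝ × ℝ → ℝ) : ℝ × ℝ → ℝ := fun z =>
  Pop nl nr c d (fun y => F (z.1, y)) z.2

/-- Maximum absolute row sum matrix norm. -/
def rowNorm {p q : ℕ} (A : Matrix (Fin p) (Fin q) ℝ) : ℝ := ⨆ i : Fin p, ∑ j, |A i j|

/-- `C_{m_r} = max_i sup{ |λ_i^{m_r} f| : f ∈ C[a,b], ‖f‖_∞ ≤ 1 }`. -/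
def Cbase (mr : ℕ) (a b : ℝ) : ℝ :=
  ⨆ i : Fin (mr + 1),
    ⨆ f : {f : ℝ → ℝ // ContinuousOn f (Set.Icc a b) ∧ supN (Set.Icc a b) f ≤ 1},
      |lam mr a b i f.1|

/-- `C_{m_r,m_k} = C_{m_r}·(m_k+1)·‖E_{m_k}^{m_r}(α^k,:)⁻¹‖_∞`. -/
def Cconst (mk mr : ℕ) (a b : ℝ) : ℝ :=
  Cbase mr a b * ((mk : ℝ) + 1) * rowNorm (Esub mk mr a b)⁻¹

/-- `Π_m`: univariate polynomial functions of degree at most `m`. -/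
def polyF (m : ℕ) : Submodule ℝ (ℝ → ℝ) :=
  Submodule.span ℝ {f : ℝ → ℝ | ∃ i ≤ m, f = fun x => x ^ i}

/-- `Π_p ⊗ Π_q`: bivariate polynomial functions of degree `≤ p` in `x` and `≤ q` in `y`. -/
def polyF2 (p q : ℕ) : Submodule ℝ (ℝ × ℝ → ℝ) :=
  Submodule.span ℝ {F : ℝ × ℝ → ℝ | ∃ i ≤ p, ∃ j ≤ q, F = fun z => z.1 ^ i * z.2 ^ j}

/-- `S_{𝐦,𝐧} = Σ_{k=0}^r Π_{m_k} ⊗ Π_{n_{r-k}}` (as a space of functions). -/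
def SmnF (r : ℕ) (m n : ℕ → ℕ) : Submodule ℝ (ℝ × ℝ → ℝ) :=
  ∑ k ∈ Finset.range (r + 1), polyF2 (m k) (n (r - k))

/-- `Π_p ⊗ Π_q` inside the bivariate polynomial ring. -/
def PiTP (p q : ℕ) : Submodule ℝ (MvPolynomial (Fin 2) ℝ) :=
  Submodule.span ℝ {P | ∃ i ≤ p, ∃ j ≤ q,
    P = MvPolynomial.monomial (Finsupp.single 0 i + Finsupp.single 1 j) (1 : ℝ)}

/-- `S_{𝐦,𝐧} = Σ_{k=0}^r Π_{m_k} ⊗ Π_{n_{r-k}}` in the bivariate polynomial ring. -/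
def SmnP (r : ℕ) (m n : ℕ → ℕ) : Submodule ℝ (MvPolynomial (Fin 2) ℝ) :=
  ∑ k ∈ Finset.range (r + 1), PiTP (m k) (n (r - k))

/-- The rectangle `[a,b] × [c,d]`. -/
def Rect (a b c d : ℝ) : Set (ℝ × ℝ) := Set.Icc a b ×ˢ Set.Icc c d

/-- `Fd` is a system of mixed partial derivatives of `Fd 0 0` of class `C^{p,q}` on the
rectangle: all mixed partials `F^{(i,j)}`, `i ≤ p`, `j ≤ q`, exist and are continuous. -/
def IsCpq (p q : ℕ) (a b c d : ℝ) (Fd : ℕ → ℕ → ℝ × ℝ → ℝ) : Prop :=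
  (∀ i < p, ∀ j ≤ q, ∀ z ∈ Rect a b c d,
      HasDerivWithinAt (fun x => Fd i j (x, z.2)) (Fd (i + 1) j z) (Set.Icc a b) z.1) ∧
  (∀ i ≤ p, ∀ j < q, ∀ z ∈ Rect a b c d,
      HasDerivWithinAt (fun y => Fd i j (z.1, y)) (Fd i (j + 1) z) (Set.Icc c d) z.2) ∧
  (∀ i ≤ p, ∀ j ≤ q, ContinuousOn (Fd i j) (Rect a b c d))

end

/-! Each univariate quasi-interpolant is bounded by its constant: after rescaling `f` to sup
norm one, `|μ_i f| ≤ C_{m_r} ‖f‖` by the very definition of `C_{m_r}`, and since the Bernstein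
basis takes values in `[0,1]`, `Σ_i |D_i(x)| ≤ (m_k+1) ‖E(α^k,:)⁻¹‖_∞`. The bivariate operators
act slice by slice and `𝐐F` is again continuous, so `‖𝐏𝐐F‖ ≤ C_{m_r,m_k} C_{n_r,n_ℓ} ‖F‖`;
the Boolean sum is then bounded by the triangle inequality. -/

section SupNorm

variable {α : Type*} {S : Set α} {f : α → ℝ} {M : ℝ}

theorem abs_le_supN [TopologicalSpace α] (hS : IsCompact S) (hf : ContinuousOn f S) {x : α}
    (hx : x ∈ S) : |f x| ≤ supN S f := by
  obtain ⟨C, hC⟩ := hS.exists_bound_of_continuousOn hf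
  exact le_ciSup (f := fun z : S => |f z.1|) ⟨C, by rintro _ ⟨z, rfl⟩; exact hC z.1 z.2⟩ ⟨x, hx⟩

theorem supN_le (hS : S.Nonempty) (h : ∀ x ∈ S, |f x| ≤ M) : supN S f ≤ M :=
  haveI := hS.to_subtype
  ciSup_le fun z => h z.1 z.2

end SupNorm

theorem sum_sum_abs_le_mul_rowNorm {p q : ℕ} (A : Matrix (Fin p) (Fin q) ℝ) :
    ∑ i, ∑ j, |A i j| ≤ p * rowNorm A := by
  calc ∑ i, ∑ j, |A i j| ≤ ∑ _i : Fin p, rowNorm A :=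
        Finset.sum_le_sum fun i _ =>
          le_ciSup (f := fun i => ∑ j, |A i j|) (Finite.bddAbove_range _) i
    _ = p * rowNorm A := by simp

section Univariate

variable {a b : ℝ}

theorem node_mem_Icc (hab : a ≤ b) {m i : ℕ} (hi : i ≤ m) : node m a b i ∈ Set.Icc a b := by
  have hi' : (i : ℝ) / m ∈ Set.Icc (0 : ℝ) 1 := by
    rcases Nat.eq_zero_or_pos m with rfl | hm
    · simp
    · exact ⟨by positivity, div_le_one_of_le₀ (by exact_mod_cast hi) (Nat.cast_nonneg m)⟩
  have hba : 0 ≤ b - a := sub_nonneg.2 hab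
  constructor <;> simp only [node] <;> nlinarith [hi'.1, hi'.2]

theorem bern_mem_Icc (hab : a < b) {m i : ℕ} (hi : i ≤ m) {x : ℝ} (hx : x ∈ Set.Icc a b) :
    bern m a b i x ∈ Set.Icc (0 : ℝ) 1 := by
  have hba : 0 < b - a := sub_pos.2 hab
  set t := (x - a) / (b - a)
  set u := (b - x) / (b - a)
  have ht : 0 ≤ t := div_nonneg (sub_nonneg.2 hx.1) hba.le
  have hu : 0 ≤ u := div_nonneg (sub_nonneg.2 hx.2) hba.le
  have htu : t + u = 1 := by rw [← add_div, show x - a + (b - x) = b - a by ring, div_self hba.ne']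
  -- `bern m a b i x` is one term of the binomial expansion of `(t + u) ^ m = 1`
  have hsum : ∑ k ∈ Finset.range (m + 1), t ^ k * u ^ (m - k) * (m.choose k : ℝ) = 1 := by
    rw [← add_pow, htu, one_pow]
  have hbern : bern m a b i x = t ^ i * u ^ (m - i) * (m.choose i : ℝ) := by
    simp only [bern]; ring
  rw [hbern]
  refine ⟨by positivity, hsum ▸ ?_⟩
  exact Finset.single_le_sum (f := fun k => t ^ k * u ^ (m - k) * (m.choose k : ℝ))
    (fun k _ => by positivity) (Finset.mem_range.2 (Nat.lt_succ_of_le hi))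

theorem continuous_bern (m : ℕ) (a b : ℝ) (i : ℕ) : Continuous (bern m a b i) := by
  unfold bern; fun_prop

theorem continuous_Dq (mk mr : ℕ) (a b : ℝ) (j : Fin (mk + 1)) : Continuous (Dq mk mr a b j) := by
  unfold Dq
  exact continuous_finsetSum _ fun l _ => continuous_const.mul (continuous_bern _ _ _ _)

theorem lam_congr_of_eqOn (hab : a ≤ b) {m : ℕ} (i : Fin (m + 1)) {f g : ℝ → ℝ}
    (h : Set.EqOn f g (Set.Icc a b)) : lam m a b i f = lam m a b i g := by
  simp only [lam]
  congr 1
  exact funext fun j => h (node_mem_Icc hab (Nat.lt_succ_iff.mp j.2))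

theorem lam_const_mul (m : ℕ) (i : Fin (m + 1)) (t : ℝ) (f : ℝ → ℝ) :
    lam m a b i (fun x => t * f x) = t * lam m a b i f := by
  simp only [lam, Matrix.mulVec, dotProduct, Finset.mul_sum]
  exact Finset.sum_congr rfl fun j _ => by ring

theorem abs_lam_le_sum_mul (hab : a ≤ b) {m : ℕ} (i : Fin (m + 1)) {f : ℝ → ℝ} {M : ℝ}
    (hf : ∀ x ∈ Set.Icc a b, |f x| ≤ M) :
    |lam m a b i f| ≤ (∑ j, |(Tmat m a b)⁻¹ i j|) * M := by
  simp only [lam, Matrix.mulVec, dotProduct, Finset.sum_mul]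
  refine (Finset.abs_sum_le_sum_abs _ _).trans (Finset.sum_le_sum fun j _ => ?_)
  rw [abs_mul]
  exact mul_le_mul_of_nonneg_left (hf _ (node_mem_Icc hab (Nat.lt_succ_iff.mp j.2)))
    (abs_nonneg _)

theorem Cbase_nonneg (m : ℕ) (a b : ℝ) : 0 ≤ Cbase m a b :=
  Real.iSup_nonneg fun _ => Real.iSup_nonneg fun _ => abs_nonneg _

theorem abs_lam_le_Cbase (hab : a ≤ b) {m : ℕ} (i : Fin (m + 1)) {f : ℝ → ℝ}
    (hfc : ContinuousOn f (Set.Icc a b)) (hf : supN (Set.Icc a b) f ≤ 1) :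
    |lam m a b i f| ≤ Cbase m a b := by
  have hbdd : BddAbove (Set.range fun f : {f : ℝ → ℝ //
      ContinuousOn f (Set.Icc a b) ∧ supN (Set.Icc a b) f ≤ 1} => |lam m a b i f.1|) := by
    refine ⟨(∑ j, |(Tmat m a b)⁻¹ i j|) * 1, ?_⟩
    rintro _ ⟨⟨g, hgc, hg⟩, rfl⟩
    exact abs_lam_le_sum_mul hab i fun x hx => (abs_le_supN isCompact_Icc hgc hx).trans hg
  refine le_ciSup_of_le ?_ i (le_ciSup hbdd ⟨f, hfc, hf⟩)
  exact Finite.bddAbove_range _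

theorem abs_lam_le_Cbase_mul (hab : a < b) {m : ℕ} (i : Fin (m + 1)) {f : ℝ → ℝ} {M : ℝ}
    (hfc : ContinuousOn f (Set.Icc a b)) (hf : ∀ x ∈ Set.Icc a b, |f x| ≤ M) :
    |lam m a b i f| ≤ Cbase m a b * M := by
  rcases (abs_nonneg _).trans (hf a (Set.left_mem_Icc.2 hab.le)) |>.eq_or_lt with rfl | hM
  · have hf0 : Set.EqOn f (fun x => 0 * f x) (Set.Icc a b) := fun x hx => by
      simpa using abs_nonpos_iff.mp (hf x hx)
    rw [lam_congr_of_eqOn hab.le i hf0, lam_const_mul]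
    simp
  · have hg : supN (Set.Icc a b) (fun x => M⁻¹ * f x) ≤ 1 :=
      supN_le ⟨a, Set.left_mem_Icc.2 hab.le⟩ fun x hx => by
        rw [abs_mul, abs_inv, abs_of_pos hM, inv_mul_le_one₀ hM]
        exact hf x hx
    have := abs_lam_le_Cbase (f := fun x => M⁻¹ * f x) hab.le i (continuousOn_const.mul hfc) hg
    rw [lam_const_mul, abs_mul, abs_inv, abs_of_pos hM, inv_mul_le_iff₀ hM] at this
    linarith

theorem abs_Dq_le (hab : a < b) {mk mr : ℕ} (j : Fin (mk + 1)) {x : ℝ}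
    (hx : x ∈ Set.Icc a b) : |Dq mk mr a b j x| ≤ ∑ l, |(Esub mk mr a b)⁻¹ l j| := by
  refine (Finset.abs_sum_le_sum_abs _ _).trans (Finset.sum_le_sum fun l _ => ?_)
  have hB := bern_mem_Icc hab (Nat.lt_succ_iff.mp l.2) hx
  rw [abs_mul, abs_of_nonneg hB.1]
  exact mul_le_of_le_one_right (abs_nonneg _) hB.2

theorem sum_abs_Dq_le (hab : a < b) {mk mr : ℕ} {x : ℝ} (hx : x ∈ Set.Icc a b) :
    ∑ j, |Dq mk mr a b j x| ≤ ((mk : ℝ) + 1) * rowNorm (Esub mk mr a b)⁻¹ := by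
  calc ∑ j, |Dq mk mr a b j x| ≤ ∑ j, ∑ l, |(Esub mk mr a b)⁻¹ l j| :=
        Finset.sum_le_sum fun j _ => abs_Dq_le hab j hx
    _ = ∑ l, ∑ j, |(Esub mk mr a b)⁻¹ l j| := Finset.sum_comm
    _ ≤ ((mk : ℝ) + 1) * rowNorm (Esub mk mr a b)⁻¹ := by
        exact_mod_cast sum_sum_abs_le_mul_rowNorm (Esub mk mr a b)⁻¹

theorem abs_Pop_le (hab : a < b) {mk mr : ℕ} {f : ℝ → ℝ} {M : ℝ}
    (hfc : ContinuousOn f (Set.Icc a b)) (hf : ∀ x ∈ Set.Icc a b, |f x| ≤ M)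
    {x : ℝ} (hx : x ∈ Set.Icc a b) :
    |Pop mk mr a b f x| ≤ Cconst mk mr a b * M := by
  have hM : 0 ≤ M := (abs_nonneg _).trans (hf a (Set.left_mem_Icc.2 hab.le))
  calc |Pop mk mr a b f x| ≤ ∑ i, |mu mk mr a b i f| * |Dq mk mr a b i x| := by
        unfold Pop
        simpa only [abs_mul] using Finset.abs_sum_le_sum_abs
          (fun i => mu mk mr a b i f * Dq mk mr a b i x) Finset.univ
    _ ≤ ∑ i, Cbase mr a b * M * |Dq mk mr a b i x| :=
        Finset.sum_le_sum fun i _ => mul_le_mul_of_nonneg_right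
          (abs_lam_le_Cbase_mul hab _ hfc hf) (abs_nonneg _)
    _ = Cbase mr a b * M * ∑ i, |Dq mk mr a b i x| := by rw [Finset.mul_sum]
    _ ≤ Cbase mr a b * M * (((mk : ℝ) + 1) * rowNorm (Esub mk mr a b)⁻¹) :=
        mul_le_mul_of_nonneg_left (sum_abs_Dq_le hab hx)
          (mul_nonneg (Cbase_nonneg _ _ _) hM)
    _ = Cconst mk mr a b * M := by rw [Cconst]; ring

end Univariate

section Bivariate

variable {a b c d : ℝ} {F : ℝ × ℝ → ℝ} {M : ℝ} {z : ℝ × ℝ}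

theorem abs_PP_le (hab : a < b) (mk mr : ℕ) (hF : ContinuousOn F (Rect a b c d))
    (hFM : ∀ w ∈ Rect a b c d, |F w| ≤ M) (hz : z ∈ Rect a b c d) :
    |PP mk mr a b F z| ≤ Cconst mk mr a b * M :=
  abs_Pop_le hab (hF.comp (continuousOn_id.prodMk continuousOn_const) fun _ hx => ⟨hx, hz.2⟩)
    (fun _ hx => hFM _ ⟨hx, hz.2⟩) hz.1

theorem abs_QQ_le (hcd : c < d) (nl nr : ℕ) (hF : ContinuousOn F (Rect a b c d))
    (hFM : ∀ w ∈ Rect a b c d, |F w| ≤ M) (hz : z ∈ Rect a b c d) :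
    |QQ nl nr c d F z| ≤ Cconst nl nr c d * M :=
  abs_Pop_le hcd (hF.comp (continuousOn_const.prodMk continuousOn_id) fun _ hy => ⟨hz.1, hy⟩)
    (fun _ hy => hFM _ ⟨hz.1, hy⟩) hz.2

theorem continuousOn_QQ (hcd : c ≤ d) (nl nr : ℕ) (hF : ContinuousOn F (Rect a b c d)) :
    ContinuousOn (QQ nl nr c d F) (Rect a b c d) := by
  have hslice : ∀ j : Fin (nr + 1),
      ContinuousOn (fun w : ℝ × ℝ => F (w.1, node nr c d j)) (Rect a b c d) := fun j =>
    hF.comp (continuousOn_fst.prodMk continuousOn_const) fun _ hw =>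
      ⟨hw.1, node_mem_Icc hcd (Nat.lt_succ_iff.mp j.2)⟩
  unfold QQ Pop mu lam
  simp only [Matrix.mulVec, dotProduct]
  refine continuousOn_finsetSum _ fun i _ => ContinuousOn.mul ?_
    ((continuous_Dq _ _ _ _ _).comp continuous_snd).continuousOn
  exact continuousOn_finsetSum _ fun j _ => continuousOn_const.mul (hslice j)

end Bivariate

theorem stmt11_general (a b c d : ℝ) (hab : a < b) (hcd : c < d) (r : ℕ) (m n : ℕ → ℕ) :
    ∀ k ≤ r, ∀ l ≤ r, ∀ F : ℝ × ℝ → ℝ, ContinuousOn F (Rect a b c d) →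
      supN (Rect a b c d)
          (fun z => PP (m k) (m r) a b F z + QQ (n l) (n r) c d F z -
            PP (m k) (m r) a b (QQ (n l) (n r) c d F) z) ≤
        (Cconst (m k) (m r) a b + Cconst (n l) (n r) c d +
            Cconst (m k) (m r) a b * Cconst (n l) (n r) c d) *
          supN (Rect a b c d) F := by
  intro k _ l _ F hF
  have hR : IsCompact (Rect a b c d) := isCompact_Icc.prod isCompact_Icc
  have hFs : ∀ w ∈ Rect a b c d, |F w| ≤ supN (Rect a b c d) F :=
    fun w hw => abs_le_supN hR hF hw
  have hQ := fun w (hw : w ∈ Rect a b c d) => abs_QQ_le hcd (n l) (n r) hF hFs hw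
  refine supN_le ⟨(a, c), Set.left_mem_Icc.2 hab.le, Set.left_mem_Icc.2 hcd.le⟩ fun z hz => ?_
  have hP := abs_PP_le hab (m k) (m r) hF hFs hz
  have hPQ := abs_PP_le hab (m k) (m r) (continuousOn_QQ hcd.le (n l) (n r) hF) hQ hz
  calc _ ≤ |PP (m k) (m r) a b F z| + |QQ (n l) (n r) c d F z| +
          |PP (m k) (m r) a b (QQ (n l) (n r) c d F) z| :=
        (abs_sub _ _).trans (add_le_add_left (abs_add_le _ _) _)
    _ ≤ _ := add_le_add (add_le_add hP (hQ z hz)) hPQ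
    _ = _ := by ring

/-- Boolean sum stability:
`‖(𝐏_{m_k} ⊕ 𝐐_{n_ℓ})F‖_∞ ≤ (C_{m_r,m_k} + C_{n_r,n_ℓ} + C_{m_r,m_k}·C_{n_r,n_ℓ})·‖F‖_∞`. -/
theorem stmt11 (a b c d : ℝ) (hab : a < b) (hcd : c < d) (r : ℕ) (m n : ℕ → ℕ)
    (hm0 : 0 < m 0) (hn0 : 0 < n 0)
    (hmi : ∀ k < r, m k < m (k + 1)) (hni : ∀ k < r, n k < n (k + 1))
    (hmd : ∀ k < r, m k ∣ m (k + 1)) (hnd : ∀ k < r, n k ∣ n (k + 1)) :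
    ∀ k ≤ r, ∀ l ≤ r, ∀ F : ℝ × ℝ → ℝ, ContinuousOn F (Rect a b c d) →
      supN (Rect a b c d)
          (fun z => PP (m k) (m r) a b F z + QQ (n l) (n r) c d F z -
            PP (m k) (m r) a b (QQ (n l) (n r) c d F) z) ≤
        (Cconst (m k) (m r) a b + Cconst (n l) (n r) c d +
            Cconst (m k) (m r) a b * Cconst (n l) (n r) c d) *
          supN (Rect a b c d) F :=
  stmt11_general a b c d hab hcd r m n
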